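/- arXiv:1605.07018 — 2 statements merged into one kernel-verified Lean document; each statement's English description precedes it below -/
import Mathlib

section
/- Fix integers K ≥ 2 and T ≥ K², set ε = (1/8)√(K/T), and let G_1,…,G_T be the random directed graphs on V = {1,…,K} generated as follows: an action v* is drawn uniformly at random from V; independently across rounds t, the loss ℓ_t(v*) is Bernoulli(1/2 − ε); every graph G_t contains all self-loops; each edge u → v with v ≠ v* (u ≠ v) is present independently with probability 1 − 2ε; and each edge u → v* (u ≠ v*) is present with probability 1 when ℓ_t(v*) = 1 and with probability (1 − 2ε)/(1 + 2ε) when ℓ_t(v*) = 0, these edges being conditionally independent of each other given ℓ_t(v*). Then with probability at least 1 − ε/8, every one of the graphs G_1,…,G_T has independence number at most 9. -/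
/-! Fix a round `t` and a set `S` of ten vertices. Given `v⋆` and the loss of round `t`, the
90 edges between distinct members of `S` are independent, and each is absent with probability
`2ε` or `4ε/(1+2ε)`, at most `4ε`; so `S` is independent in `G_t` with probability at most
`(4ε)^90`. A union bound over the `T` rounds and the at most `K^10` sets bounds the failure
probability by `T K^10 (4ε)^90`, and `T ≥ K²` makes this at most `ε/8`. -/

open scoped BigOperators

/-- The independence number of the directed graph `G` is at most `n`: every set `S`
of vertices with no edge `u → v` between two distinct members (self-loops disregarded)
has size at most `n`. -/
def IndepNumLE {K : ℕ} (G : Fin K → Fin K → Bool) (n : ℕ) : Prop :=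
  ∀ S : Finset (Fin K), (∀ u ∈ S, ∀ v ∈ S, u ≠ v → G u v = false) → S.card ≤ n

/-- The probability mass function of the random graph construction: an outcome consists
of the special action `v⋆`, the Boolean losses `L t` of action `v⋆` at all rounds, and
the feedback graphs `G t`.  `v⋆` is uniform on `Fin K`; independently across rounds, the
loss of `v⋆` is Bernoulli(1/2 - ε); all self-loops are present; each edge `u → v` with
`v ≠ v⋆` is present independently with probability `1 - 2ε`; each edge `u → v⋆` is
present with probability `1` if `L t = 1` and with probability `(1-2ε)/(1+2ε)` if
`L t = 0`, conditionally independently given `L t`. -/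
noncomputable def graphDensity (K T : ℕ) (ε : ℝ)
    (ω : Fin K × (Fin T → Bool) × (Fin T → Fin K → Fin K → Bool)) : ℝ :=
  (1 / K) *
    ∏ t : Fin T,
      ((if ω.2.1 t then 1 / 2 - ε else 1 / 2 + ε) *
        ∏ p : Fin K × Fin K,
          if p.1 = p.2 then (if ω.2.2 t p.1 p.2 then 1 else 0)
          else if p.2 = ω.1 then
            (if ω.2.1 t then (if ω.2.2 t p.1 p.2 then 1 else 0)
             else (if ω.2.2 t p.1 p.2 then (1 - 2 * ε) / (1 + 2 * ε)
                   else (4 * ε) / (1 + 2 * ε)))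
          else (if ω.2.2 t p.1 p.2 then 1 - 2 * ε else 2 * ε))

theorem Finset.sum_filter_forall_mem_prod {ι α R : Type*} [Fintype ι] [DecidableEq ι]
    [Fintype α] [DecidableEq α] [CommSemiring R] (s : Finset ι) (A : ι → Finset α)
    (w : ι → α → R) (hw : ∀ i ∉ s, ∑ a, w i a = 1) :
    ∑ x : ι → α with ∀ i ∈ s, x i ∈ A i, ∏ i, w i (x i) = ∏ i ∈ s, ∑ a ∈ A i, w i a := by
  have hcyl : ({x : ι → α | ∀ i ∈ s, x i ∈ A i} : Finset (ι → α))
      = Fintype.piFinset fun i => if i ∈ s then A i else univ := by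
    ext x
    simp only [mem_filter, mem_univ, true_and, Fintype.mem_piFinset]
    exact forall_congr' fun i => by split_ifs with hi <;> simp [hi]
  rw [hcyl, ← prod_univ_sum, ← Fintype.prod_ite_mem s]
  refine prod_congr rfl fun i _ => ?_
  split_ifs with hi
  · rfl
  · exact hw i hi

theorem PMF.toOuterMeasure_setOf_eq_ofReal_sum {α : Type*} [Fintype α] (μ : PMF α)
    {f : α → ℝ} (hf : ∀ a, 0 ≤ f a) (hμ : ∀ a, μ a = ENNReal.ofReal (f a)) (P : α → Prop)
    [DecidablePred P] :
    μ.toOuterMeasure {a | P a} = ENNReal.ofReal (∑ a with P a, f a) := by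
  rw [← Finset.coe_filter_univ, PMF.toOuterMeasure_apply_finset,
    ENNReal.ofReal_sum_of_nonneg fun a _ => hf a]
  exact Finset.sum_congr rfl fun a _ => hμ a

theorem PMF.one_sub_toOuterMeasure_compl_le {α : Type*} (μ : PMF α) (s : Set α) :
    1 - μ.toOuterMeasure sᶜ ≤ μ.toOuterMeasure s := by
  rw [tsub_le_iff_right]
  calc 1 = μ.toOuterMeasure (s ∪ sᶜ) := by
        rw [Set.union_compl_self, (μ.toOuterMeasure_apply_eq_one_iff _).mpr (Set.subset_univ _)]
    _ ≤ μ.toOuterMeasure s + μ.toOuterMeasure sᶜ := MeasureTheory.measure_union_le _ _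

theorem natCast_mul_pow_mul_sqrt_pow_le {K T : ℕ} (hT : K ^ 2 ≤ T) :
    (T : ℝ) * K ^ 10 * (√((K : ℝ) / T) / 2) ^ 90 ≤ √((K : ℝ) / T) / 64 := by
  set x : ℝ := K / T
  set a : ℝ := √x
  have hKT : (K : ℝ) ^ 2 ≤ T := by exact_mod_cast hT
  have hTx : T * x = K := by
    obtain rfl | hT0 := Nat.eq_zero_or_pos T
    · obtain rfl : K = 0 := by simpa using hT
      simp
    · exact mul_div_cancel₀ _ (by positivity)
  have hKx : K * x ≤ 1 := by
    rw [show (K : ℝ) * x = K ^ 2 / T by ring]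
    exact div_le_one_of_le₀ hKT (Nat.cast_nonneg T)
  have hx1 : x ≤ 1 := div_le_one_of_le₀
    (le_trans (by exact_mod_cast Nat.le_self_pow two_ne_zero K) hKT) (Nat.cast_nonneg T)
  have ha2 : a ^ 2 = x := Real.sq_sqrt (by positivity)
  calc (T : ℝ) * K ^ 10 * (a / 2) ^ 90 = (T * x) * K ^ 10 * x ^ 43 * a / 2 ^ 90 * a := by
        rw [div_pow, show a ^ 90 = (a ^ 2) ^ 44 * a * a by ring, ha2]; ring
    _ = (K * x) ^ 11 * x ^ 32 * a / 2 ^ 90 * a := by rw [hTx]; ring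
    _ ≤ 1 * 1 * 1 / 2 ^ 90 * a := by
        gcongr
        exacts [pow_le_one₀ (by positivity) hKx, pow_le_one₀ (by positivity) hx1,
          Real.sqrt_le_one.mpr hx1]
    _ ≤ a / 64 := by linarith [Real.sqrt_nonneg x]

namespace FeedbackGraph

def IsIndepSet {V : Type*} (G : V → V → Bool) (S : Finset V) : Prop :=
  ∀ u ∈ S, ∀ v ∈ S, u ≠ v → G u v = false

instance {V : Type*} [DecidableEq V] (G : V → V → Bool) (S : Finset V) :
    Decidable (IsIndepSet G S) := by
  unfold IsIndepSet; infer_instance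

theorem isIndepSet_iff_forall_mem_offDiag {V : Type*} {G : V → V → Bool} {S : Finset V} :
    IsIndepSet G S ↔ ∀ p ∈ S.offDiag, G p.1 p.2 = false :=
  ⟨fun h _ hp => h _ (Finset.mem_offDiag.mp hp).1 _ (Finset.mem_offDiag.mp hp).2.1
      (Finset.mem_offDiag.mp hp).2.2,
    fun h u hu v hv huv => h (u, v) (Finset.mem_offDiag.mpr ⟨hu, hv, huv⟩)⟩

theorem exists_isIndepSet_card_eq_of_not_indepNumLE {K : ℕ} {G : Fin K → Fin K → Bool} {n : ℕ}
    (h : ¬ IndepNumLE G n) : ∃ S : Finset (Fin K), S.card = n + 1 ∧ IsIndepSet G S := by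
  simp only [IndepNumLE, not_forall, not_le] at h
  obtain ⟨S, hS, hcard⟩ := h
  obtain ⟨S', hsub, hS'⟩ := Finset.exists_subset_card_eq hcard
  exact ⟨S', hS', fun u hu v hv huv => hS u (hsub hu) v (hsub hv) huv⟩

section Weights

variable {V : Type*} [DecidableEq V] {ε : ℝ}

noncomputable def edgeWeight (ε : ℝ) (v : V) (b : Bool) (p : V × V) (x : Bool) : ℝ :=
  if p.1 = p.2 then (if x then 1 else 0)
  else if p.2 = v then
    (if b then (if x then 1 else 0)
     else (if x then (1 - 2 * ε) / (1 + 2 * ε) else (4 * ε) / (1 + 2 * ε)))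
  else (if x then 1 - 2 * ε else 2 * ε)

noncomputable def lossWeight (ε : ℝ) (b : Bool) : ℝ := if b then 1 / 2 - ε else 1 / 2 + ε

theorem edgeWeight_nonneg (h0 : 0 ≤ ε) (h1 : ε ≤ 1 / 2) (v : V) (b : Bool) (p : V × V)
    (x : Bool) : 0 ≤ edgeWeight ε v b p x := by
  unfold edgeWeight
  split_ifs <;> first | positivity | linarith | exact div_nonneg (by linarith) (by linarith)

theorem sum_edgeWeight (h0 : 0 ≤ ε) (v : V) (b : Bool) (p : V × V) :
    ∑ x, edgeWeight ε v b p x = 1 := by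
  have : 1 + 2 * ε ≠ 0 := by linarith
  simp only [Fintype.sum_bool, edgeWeight, if_true, Bool.false_eq_true, if_false]
  split_ifs <;> first | (rw [← add_div, div_eq_one_iff_eq this]; ring) | norm_num

theorem edgeWeight_false_le (h0 : 0 ≤ ε) (v : V) (b : Bool) {p : V × V} (hp : p.1 ≠ p.2) :
    edgeWeight ε v b p false ≤ 4 * ε := by
  simp only [edgeWeight, if_neg hp, Bool.false_eq_true, if_false]
  split_ifs
  · positivity
  · exact div_le_self (by positivity) (by linarith)
  · linarith

theorem lossWeight_nonneg (h0 : 0 ≤ ε) (h1 : ε ≤ 1 / 2) (b : Bool) : 0 ≤ lossWeight ε b := by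
  unfold lossWeight; split_ifs <;> linarith

theorem sum_lossWeight : ∑ b, lossWeight ε b = 1 := by
  simp only [Fintype.sum_bool, lossWeight]; norm_num

variable [Fintype V]

noncomputable def graphWeight (ε : ℝ) (v : V) (b : Bool) (g : V → V → Bool) : ℝ :=
  ∏ p : V × V, edgeWeight ε v b p (g p.1 p.2)

noncomputable def roundWeight (ε : ℝ) (v : V) (r : Bool × (V → V → Bool)) : ℝ :=
  lossWeight ε r.1 * graphWeight ε v r.1 r.2

theorem sum_graphWeight (h0 : 0 ≤ ε) (v : V) (b : Bool) : ∑ g, graphWeight ε v b g = 1 := by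
  rw [← (Equiv.curry V V Bool).sum_comp]
  calc ∑ f : V × V → Bool, ∏ p, edgeWeight ε v b p (f p)
      = ∏ p, ∑ x, edgeWeight ε v b p x := (Fintype.prod_sum _).symm
    _ = 1 := Finset.prod_eq_one fun p _ => sum_edgeWeight h0 v b p

theorem sum_graphWeight_isIndepSet_le (h0 : 0 ≤ ε) (h1 : ε ≤ 1 / 2) (v : V) (b : Bool)
    (S : Finset V) :
    ∑ g with IsIndepSet g S, graphWeight ε v b g ≤ (4 * ε) ^ S.offDiag.card := by
  have hcyl : ∑ g with IsIndepSet g S, graphWeight ε v b g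
      = ∏ p ∈ S.offDiag, ∑ x ∈ {false}, edgeWeight ε v b p x := by
    rw [← Finset.sum_filter_forall_mem_prod S.offDiag (fun _ => {false})
      (fun p => edgeWeight ε v b p) (fun p _ => sum_edgeWeight h0 v b p)]
    exact Finset.sum_equiv (Equiv.curry V V Bool).symm
      (by simp [isIndepSet_iff_forall_mem_offDiag]) (fun _ _ => rfl)
  calc ∑ g with IsIndepSet g S, graphWeight ε v b g
      = ∏ p ∈ S.offDiag, edgeWeight ε v b p false := by simp only [hcyl, Finset.sum_singleton]
    _ ≤ ∏ _p ∈ S.offDiag, 4 * ε :=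
        Finset.prod_le_prod (fun p _ => edgeWeight_nonneg h0 h1 v b p false)
          fun _ hp => edgeWeight_false_le h0 v b (Finset.mem_offDiag.mp hp).2.2
    _ = (4 * ε) ^ S.offDiag.card := Finset.prod_const _

theorem roundWeight_nonneg (h0 : 0 ≤ ε) (h1 : ε ≤ 1 / 2) (v : V) (r : Bool × (V → V → Bool)) :
    0 ≤ roundWeight ε v r :=
  mul_nonneg (lossWeight_nonneg h0 h1 r.1)
    (Finset.prod_nonneg fun p _ => edgeWeight_nonneg h0 h1 v r.1 p _)

theorem sum_roundWeight (h0 : 0 ≤ ε) (v : V) : ∑ r, roundWeight ε v r = 1 := by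
  simp only [roundWeight, Fintype.sum_prod_type, ← Finset.mul_sum, sum_graphWeight h0, mul_one,
    sum_lossWeight]

theorem sum_roundWeight_isIndepSet_le (h0 : 0 ≤ ε) (h1 : ε ≤ 1 / 2) (v : V) (S : Finset V) :
    ∑ r : Bool × (V → V → Bool) with IsIndepSet r.2 S, roundWeight ε v r
      ≤ (4 * ε) ^ S.offDiag.card := by
  calc ∑ r : Bool × (V → V → Bool) with IsIndepSet r.2 S, roundWeight ε v r
      = ∑ b, ∑ g with IsIndepSet g S, lossWeight ε b * graphWeight ε v b g := by
        simp only [Finset.sum_filter, Fintype.sum_prod_type]; rfl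
    _ ≤ ∑ b, lossWeight ε b * (4 * ε) ^ S.offDiag.card := by
        refine Finset.sum_le_sum fun b _ => ?_
        rw [← Finset.mul_sum]
        exact mul_le_mul_of_nonneg_left (sum_graphWeight_isIndepSet_le h0 h1 v b S)
          (lossWeight_nonneg h0 h1 b)
    _ = (4 * ε) ^ S.offDiag.card := by rw [← Finset.sum_mul, sum_lossWeight, one_mul]

end Weights

abbrev Outcome (K T : ℕ) : Type := Fin K × (Fin T → Bool) × (Fin T → Fin K → Fin K → Bool)

theorem graphDensity_eq (K T : ℕ) (ε : ℝ) (ω : Outcome K T) :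
    graphDensity K T ε ω = (1 / K) * ∏ t, roundWeight ε ω.1 (ω.2.1 t, ω.2.2 t) := rfl

theorem sum_graphDensity_isIndepSet_le {K T : ℕ} {ε : ℝ} (h0 : 0 ≤ ε) (h1 : ε ≤ 1 / 2)
    (t₀ : Fin T) (S : Finset (Fin K)) :
    ∑ ω : Outcome K T with IsIndepSet (ω.2.2 t₀) S, graphDensity K T ε ω
      ≤ (4 * ε) ^ S.offDiag.card := by
  have hrounds : ∀ v : Fin K,
      ∑ y : (Fin T → Bool) × (Fin T → Fin K → Fin K → Bool) with IsIndepSet (y.2 t₀) S,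
        ∏ t, roundWeight ε v (y.1 t, y.2 t) ≤ (4 * ε) ^ S.offDiag.card := by
    intro v
    have hcyl := Finset.sum_filter_forall_mem_prod {t₀}
      (fun _ => {r : Bool × (Fin K → Fin K → Bool) | IsIndepSet r.2 S})
      (fun _ => roundWeight ε v) (fun _ _ => sum_roundWeight h0 v)
    rw [Finset.prod_singleton] at hcyl
    refine (Finset.sum_equiv (Equiv.arrowProdEquivProdArrow _ _ _).symm ?_ fun _ _ => rfl).trans_le
      (hcyl.trans_le (sum_roundWeight_isIndepSet_le h0 h1 v S))
    simp
  calc ∑ ω : Outcome K T with IsIndepSet (ω.2.2 t₀) S, graphDensity K T ε ω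
      = ∑ v : Fin K, (1 / K) * ∑ y : (Fin T → Bool) × (Fin T → Fin K → Fin K → Bool)
          with IsIndepSet (y.2 t₀) S, ∏ t, roundWeight ε v (y.1 t, y.2 t) := by
        simp only [Finset.sum_filter, Fintype.sum_prod_type, Finset.mul_sum, graphDensity_eq,
          mul_ite, mul_zero]
    _ ≤ ∑ _v : Fin K, (1 / K) * (4 * ε) ^ S.offDiag.card :=
        Finset.sum_le_sum fun v _ => mul_le_mul_of_nonneg_left (hrounds v) (by positivity)
    _ ≤ (4 * ε) ^ S.offDiag.card := by
        rw [Finset.sum_const, Finset.card_univ, Fintype.card_fin, nsmul_eq_mul, ← mul_assoc,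
          mul_one_div]
        exact mul_le_of_le_one_left (by positivity) (div_self_le_one _)

theorem graphDensity_nonneg {K T : ℕ} {ε : ℝ} (h0 : 0 ≤ ε) (h1 : ε ≤ 1 / 2)
    (ω : Outcome K T) : 0 ≤ graphDensity K T ε ω := by
  rw [graphDensity_eq]
  exact mul_nonneg (by positivity) (Finset.prod_nonneg fun t _ => roundWeight_nonneg h0 h1 _ _)

theorem toOuterMeasure_not_forall_indepNumLE_le {K T : ℕ} {ε : ℝ} (h0 : 0 ≤ ε)
    (h1 : ε ≤ 1 / 2) (μ : PMF (Outcome K T))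
    (hμ : ∀ ω, μ ω = ENNReal.ofReal (graphDensity K T ε ω)) (n : ℕ) :
    μ.toOuterMeasure {ω | ∀ t, IndepNumLE (ω.2.2 t) n}ᶜ
      ≤ ENNReal.ofReal (T * K.choose (n + 1) * (4 * ε) ^ ((n + 1) * n)) := by
  set I := (Finset.univ : Finset (Fin T)) ×ˢ
    Finset.powersetCard (n + 1) (Finset.univ : Finset (Fin K))
  have hcover : {ω : Outcome K T | ∀ t, IndepNumLE (ω.2.2 t) n}ᶜ
      ⊆ ⋃ q ∈ I, {ω : Outcome K T | IsIndepSet (ω.2.2 q.1) q.2} := by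
    intro ω hω
    simp only [Set.mem_compl_iff, Set.mem_ofPred_eq, not_forall] at hω
    obtain ⟨t, ht⟩ := hω
    obtain ⟨S, hS, hindep⟩ := exists_isIndepSet_card_eq_of_not_indepNumLE ht
    exact Set.mem_biUnion (x := (t, S)) (by simp [I, hS]) hindep
  have hcyl : ∀ q ∈ I, μ.toOuterMeasure {ω | IsIndepSet (ω.2.2 q.1) q.2}
      ≤ ENNReal.ofReal ((4 * ε) ^ ((n + 1) * n)) := by
    intro q hq
    have hcard : q.2.offDiag.card = (n + 1) * n := by
      rw [Finset.offDiag_card, (Finset.mem_powersetCard.mp (Finset.mem_product.mp hq).2).2,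
        ← Nat.mul_sub_one, Nat.add_sub_cancel]
    rw [μ.toOuterMeasure_setOf_eq_ofReal_sum (graphDensity_nonneg h0 h1) hμ, ← hcard]
    exact ENNReal.ofReal_le_ofReal (sum_graphDensity_isIndepSet_le h0 h1 q.1 q.2)
  calc μ.toOuterMeasure {ω | ∀ t, IndepNumLE (ω.2.2 t) n}ᶜ
      ≤ ∑ q ∈ I, μ.toOuterMeasure {ω | IsIndepSet (ω.2.2 q.1) q.2} :=
        (MeasureTheory.measure_mono hcover).trans (MeasureTheory.measure_biUnion_finset_le _ _)
    _ ≤ ∑ _q ∈ I, ENNReal.ofReal ((4 * ε) ^ ((n + 1) * n)) := Finset.sum_le_sum hcyl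
    _ = ENNReal.ofReal (T * K.choose (n + 1) * (4 * ε) ^ ((n + 1) * n)) := by
        rw [← ENNReal.ofReal_sum_of_nonneg fun _ _ => by positivity, Finset.sum_const,
          nsmul_eq_mul, Finset.card_product, Finset.card_powersetCard]
        simp

end FeedbackGraph

open FeedbackGraph in
theorem stmt2_general (K T : ℕ) (hT : K ^ 2 ≤ T)
    (ε : ℝ) (hε : ε = Real.sqrt ((K : ℝ) / T) / 8)
    (μ : PMF (Fin K × (Fin T → Bool) × (Fin T → Fin K → Fin K → Bool)))
    (hμ : ∀ ω, μ ω = ENNReal.ofReal (graphDensity K T ε ω)) :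
    μ.toOuterMeasure {ω | ∀ t, IndepNumLE (ω.2.2 t) 9} ≥ ENNReal.ofReal (1 - ε / 8) := by
  have hx1 : (K : ℝ) / T ≤ 1 := div_le_one_of_le₀
    (by exact_mod_cast (Nat.le_self_pow two_ne_zero K).trans hT) (Nat.cast_nonneg T)
  have h0 : 0 ≤ ε := hε ▸ by positivity
  have h1 : ε ≤ 1 / 2 := by linarith [Real.sqrt_le_one.mpr hx1]
  have hunion : (T : ℝ) * K.choose (9 + 1) * (4 * ε) ^ ((9 + 1) * 9) ≤ ε / 8 :=
    calc (T : ℝ) * K.choose (9 + 1) * (4 * ε) ^ ((9 + 1) * 9)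
        ≤ T * K ^ 10 * (4 * ε) ^ 90 := by gcongr; exact_mod_cast Nat.choose_le_pow K 10
      _ ≤ ε / 8 := by
        rw [show 4 * ε = √((K : ℝ) / T) / 2 by rw [hε]; ring, hε]
        linarith [natCast_mul_pow_mul_sqrt_pow_le hT]
  calc ENNReal.ofReal (1 - ε / 8) = 1 - ENNReal.ofReal (ε / 8) := by
        rw [ENNReal.ofReal_sub _ (by positivity), ENNReal.ofReal_one]
    _ ≤ 1 - μ.toOuterMeasure {ω | ∀ t, IndepNumLE (ω.2.2 t) 9}ᶜ :=
        tsub_le_tsub_left ((toOuterMeasure_not_forall_indepNumLE_le h0 h1 μ hμ 9).trans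
          (ENNReal.ofReal_le_ofReal hunion)) 1
    _ ≤ μ.toOuterMeasure {ω | ∀ t, IndepNumLE (ω.2.2 t) 9} :=
        μ.one_sub_toOuterMeasure_compl_le _

/-- For `K ≥ 2`, `T ≥ K²` and `ε = (1/8)√(K/T)`, with probability at
least `1 - ε/8` every one of the random graphs `G₁,…,G_T` generated as above has
independence number at most `9`. -/
theorem stmt2 (K T : ℕ) (hK : 2 ≤ K) (hT : K ^ 2 ≤ T)
    (ε : ℝ) (hε : ε = Real.sqrt ((K : ℝ) / T) / 8)
    (μ : PMF (Fin K × (Fin T → Bool) × (Fin T → Fin K → Fin K → Bool)))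
    (hμ : ∀ ω, μ ω = ENNReal.ofReal (graphDensity K T ε ω)) :
    μ.toOuterMeasure {ω | ∀ t, IndepNumLE (ω.2.2 t) 9} ≥ ENNReal.ofReal (1 - ε / 8) :=
  stmt2_general K T hT ε hε μ hμ
end

section
/- Consider the uniform-sampling elimination process on a nonempty subset U of a K-element vertex set V, driven by a sequence G_1, G_2, … of directed graphs on V, each containing all self-loops. If K ≥ 2 and every graph G_r has independence number at most α, then the expected number of steps until the process empties satisfies E[τ] ≤ 10·α·log K. -/
/-!
Symmetrising a feedback graph at most doubles the sum of its out-degrees and does not change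
its independent sets, so the Caro–Wei bound and Cauchy–Schwarz give
`∑_{u ∈ S} |N(u) ∩ S| ≥ |S|² / (2α)` for every `S`. Hence a uniformly drawn vertex removes on
average at least `|S| / (2α)` elements, and `E|U_{r+1}| ≤ (1 - 1/(2α))^r K`. Bounding
`P(U_{r+1} ≠ ∅)` by `1` for `r < ⌈2α log K⌉` and by `E|U_{r+1}|` afterwards gives
`E[τ] ≤ ⌈2α log K⌉ + 2α ≤ 10 α log K`.
-/

open scoped BigOperators

/-- One step of the uniform-sampling elimination process with feedback graph `G`:
from a nonempty current set `U`, a vertex `u` is drawn uniformly at random from `U`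
and the out-neighborhood of `u` in `G` is removed from `U`; the empty set is absorbing. -/
noncomputable def elimStep {K : ℕ} (G : Fin K → Fin K → Bool) (U : Finset (Fin K)) :
    PMF (Finset (Fin K)) :=
  if h : U.Nonempty then
    (PMF.uniformOfFinset U h).map (fun u => U.filter (fun v => G u v = false))
  else PMF.pure ∅

/-- `elimProc G U r` is the law of `U_{r+1}` in the uniform-sampling elimination process
started from `U₁ = U` and driven by the graphs `G 1, G 2, …` (step `r`, from `U_r` to
`U_{r+1}`, uses the graph `G r`). -/
noncomputable def elimProc {K : ℕ} (G : ℕ → Fin K → Fin K → Bool) (U : Finset (Fin K)) :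
    ℕ → PMF (Finset (Fin K))
  | 0 => PMF.pure U
  | r + 1 => (elimProc G U r).bind (elimStep (G (r + 1)))

open Finset
open scoped ENNReal

namespace PMF

variable {α β : Type*} [Fintype α] [Fintype β]

theorem sum_bind_mul (p : PMF α) (f : α → PMF β) (w : β → ℝ≥0∞) :
    ∑ b, p.bind f b * w b = ∑ a, p a * ∑ b, f a b * w b := by
  simp only [bind_apply, tsum_fintype, sum_mul, mul_sum, mul_assoc]
  exact sum_comm

theorem sum_map_mul [DecidableEq β] (p : PMF α) (f : α → β) (w : β → ℝ≥0∞) :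
    ∑ b, p.map f b * w b = ∑ a, p a * w (f a) := by
  simp only [map_apply, tsum_fintype, sum_mul, ite_mul, zero_mul]
  rw [sum_comm]
  simp

theorem sum_uniformOfFinset_mul [DecidableEq α] (s : Finset α) (hs : s.Nonempty)
    (w : α → ℝ≥0∞) :
    ∑ a, uniformOfFinset s hs a * w a = (#s : ℝ≥0∞)⁻¹ * ∑ a ∈ s, w a := by
  simp only [uniformOfFinset_apply, ite_mul, zero_mul, mul_sum]
  rw [sum_ite_mem, univ_inter]

end PMF

section CaroWei

variable {V : Type*} [DecidableEq V] {A : V → V → Bool}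

/-- The Caro–Wei bound. Deleting the closed neighbourhood of a vertex of minimum degree removes
terms summing to at most `1` and lowers the independence number by one. -/
theorem sum_inv_card_nbhd_le (hsymm : ∀ u v, A u v = A v u) (hrefl : ∀ v, A v v)
    {α : ℕ} (S : Finset V)
    (hS : ∀ I ⊆ S, (I : Set V).Pairwise (A · · = false) → #I ≤ α) :
    ∑ v ∈ S, (#{u ∈ S | A v u} : ℝ)⁻¹ ≤ α := by
  induction S using Finset.strongInduction generalizing α with
  | H S ih =>
  rcases S.eq_empty_or_nonempty with rfl | hne
  · simp
  obtain ⟨v, hv, hmin⟩ := S.exists_min_image (fun v => #{u ∈ S | A v u}) hne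
  obtain ⟨β, rfl⟩ : ∃ β, α = β + 1 :=
    Nat.exists_eq_add_of_le' (hS {v} (by simpa using hv) (by simp))
  set T := {u ∈ S | ¬ A v u}
  have hdeg_pos : ∀ w ∈ S, 0 < #{u ∈ S | A w u} := fun w hw =>
    card_pos.mpr ⟨w, mem_filter.mpr ⟨hw, hrefl w⟩⟩
  have hnbhd : ∑ w ∈ S with A v w, (#{u ∈ S | A w u} : ℝ)⁻¹ ≤ 1 := by
    calc ∑ w ∈ S with A v w, (#{u ∈ S | A w u} : ℝ)⁻¹
        ≤ ∑ w ∈ S with A v w, (#{u ∈ S | A v u} : ℝ)⁻¹ := by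
          refine sum_le_sum fun w hw => ?_
          have hw := (mem_filter.mp hw).1
          exact inv_anti₀ (by exact_mod_cast hdeg_pos v hv) (by exact_mod_cast hmin w hw)
      _ ≤ 1 := by
          rw [sum_const, nsmul_eq_mul]
          exact mul_inv_le_one
  have hrest : ∑ w ∈ T, (#{u ∈ S | A w u} : ℝ)⁻¹ ≤ β := by
    refine le_trans (sum_le_sum fun w hw => ?_) (ih T ?_ fun I hIT hI => ?_)
    · have hTS : T ⊆ S := filter_subset _ _
      exact inv_anti₀ (by exact_mod_cast card_pos.mpr ⟨w, mem_filter.mpr ⟨hw, hrefl w⟩⟩)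
        (by exact_mod_cast card_le_card (filter_subset_filter _ hTS))
    · exact filter_ssubset.mpr ⟨v, hv, by simp [hrefl v]⟩
    · have hvI : v ∉ I := fun h => by simpa [T, hrefl v] using hIT h
      have hinsert : ((insert v I : Finset V) : Set V).Pairwise (A · · = false) := by
        rw [coe_insert]
        refine hI.insert fun u hu _ => ?_
        have : A v u = false := by simpa [T] using (mem_filter.mp (hIT hu)).2
        exact ⟨this, hsymm u v ▸ this⟩
      have := hS _ (insert_subset hv ((hIT.trans (filter_subset _ _)))) hinsert
      rw [card_insert_of_notMem hvI] at this
      omega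
  rw [← sum_filter_add_sum_filter_not S (fun w => A v w)]
  push_cast
  linarith

end CaroWei

section Digraph

variable {V : Type*} [DecidableEq V] (G : V → V → Bool)

theorem sum_card_nbhd_symmClosure_le (S : Finset V) :
    ∑ v ∈ S, #{u ∈ S | G v u || G u v} ≤ 2 * ∑ v ∈ S, #{u ∈ S | G v u} := by
  have hin : ∑ v ∈ S, #{u ∈ S | G u v} = ∑ v ∈ S, #{u ∈ S | G v u} :=
    (sum_card_bipartiteAbove_eq_sum_card_bipartiteBelow (fun v u => G v u = true)).symm
  calc ∑ v ∈ S, #{u ∈ S | G v u || G u v}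
      ≤ ∑ v ∈ S, (#{u ∈ S | G v u} + #{u ∈ S | G u v}) := sum_le_sum fun v _ => by
        simpa only [Bool.or_eq_true, filter_or] using card_union_le _ _
    _ = 2 * ∑ v ∈ S, #{u ∈ S | G v u} := by rw [sum_add_distrib, hin, two_mul]

variable {G}

theorem sq_card_le_two_mul_sum_card_nbhd (hself : ∀ v, G v v) {α : ℕ} (S : Finset V)
    (hS : ∀ I ⊆ S, (I : Set V).Pairwise (G · · = false) → #I ≤ α) :
    (#S : ℝ) ^ 2 ≤ 2 * α * ∑ v ∈ S, (#{u ∈ S | G v u} : ℝ) := by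
  rcases S.eq_empty_or_nonempty with rfl | hne
  · simp
  have hcaro : ∑ v ∈ S, (#{u ∈ S | G v u || G u v} : ℝ)⁻¹ ≤ α :=
    sum_inv_card_nbhd_le (A := fun u v => G u v || G v u) (fun u v => Bool.or_comm _ _)
      (fun v => by simp [hself v]) S fun I hIS hI => hS I hIS <| hI.imp fun u v h => by simp_all
  have hpos : ∀ v ∈ S, (0 : ℝ) < #{u ∈ S | G v u || G u v} := fun v hv => by
    exact_mod_cast card_pos.mpr ⟨v, mem_filter.mpr ⟨hv, by simp [hself v]⟩⟩
  have htitu := sq_sum_div_le_sum_sq_div S (fun _ => (1 : ℝ)) hpos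
  simp only [sum_const, nsmul_eq_mul, mul_one, one_pow, one_div] at htitu
  have hsymm : ∑ v ∈ S, (#{u ∈ S | G v u || G u v} : ℝ)
      ≤ 2 * ∑ v ∈ S, (#{u ∈ S | G v u} : ℝ) := by
    exact_mod_cast sum_card_nbhd_symmClosure_le G S
  calc (#S : ℝ) ^ 2
      ≤ (∑ v ∈ S, (#{u ∈ S | G v u || G u v} : ℝ)⁻¹) *
          ∑ v ∈ S, (#{u ∈ S | G v u || G u v} : ℝ) :=
        (div_le_iff₀ (sum_pos hpos hne)).mp htitu
    _ ≤ α * (2 * ∑ v ∈ S, (#{u ∈ S | G v u} : ℝ)) :=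
        mul_le_mul hcaro hsymm (sum_nonneg fun v hv => (hpos v hv).le) (by positivity)
    _ = 2 * α * ∑ v ∈ S, (#{u ∈ S | G v u} : ℝ) := by ring

theorem sum_card_nonNbhd_le (hself : ∀ v, G v v) {α : ℕ} (S : Finset V)
    (hS : ∀ I ⊆ S, (I : Set V).Pairwise (G · · = false) → #I ≤ α) :
    (∑ v ∈ S, #{u ∈ S | G v u = false} : ℝ) ≤ (1 - (2 * α : ℝ)⁻¹) * #S ^ 2 := by
  have hsplit : ∑ v ∈ S, (#{u ∈ S | G v u = false} : ℝ) + ∑ v ∈ S, (#{u ∈ S | G v u} : ℝ)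
      = #S ^ 2 := by
    rw [← sum_add_distrib, sq, ← nsmul_eq_mul, ← sum_const]
    refine sum_congr rfl fun v _ => ?_
    rw [add_comm]
    exact_mod_cast by simpa using card_filter_add_card_filter_not (s := S) (G v · = true)
  have hnbhd : (#S : ℝ) ^ 2 / (2 * α) ≤ ∑ v ∈ S, (#{u ∈ S | G v u} : ℝ) :=
    div_le_of_le_mul₀ (by positivity) (by positivity)
      (by linarith [sq_card_le_two_mul_sum_card_nbhd hself S hS])
  rw [div_eq_mul_inv] at hnbhd
  linarith

end Digraph

section Elimination

variable {V : Type*} [Fintype V]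

noncomputable def expectedCard (p : PMF (Finset V)) : ℝ≥0∞ := ∑ S, p S * #S

theorem sum_nonempty_le_expectedCard (p : PMF (Finset V)) :
    ∑ S with S.Nonempty, p S ≤ expectedCard p := by
  refine (sum_le_sum fun S hS => ?_).trans (sum_le_sum_of_subset (filter_subset _ univ))
  have : (1 : ℝ≥0∞) ≤ #S := by exact_mod_cast (mem_filter.mp hS).2.card_pos
  simpa using le_mul_of_one_le_right' this (a := p S)

theorem sum_nonempty_le_one (p : PMF (Finset V)) : ∑ S with S.Nonempty, p S ≤ 1 := by
  refine (sum_le_sum_of_subset (filter_subset _ univ)).trans ?_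
  rw [← p.tsum_coe, tsum_fintype]

theorem sum_nonempty_toReal_le_min {p : PMF (Finset V)} {b : ℝ} (hb0 : 0 ≤ b)
    (hb : expectedCard p ≤ ENNReal.ofReal b) :
    ∑ S with S.Nonempty, (p S).toReal ≤ min 1 b := by
  rw [← ENNReal.toReal_sum fun S _ => p.apply_ne_top S]
  exact le_min
    (ENNReal.toReal_le_of_le_ofReal zero_le_one (by simpa using sum_nonempty_le_one p))
    (ENNReal.toReal_le_of_le_ofReal hb0 ((sum_nonempty_le_expectedCard p).trans hb))

variable {K : ℕ}

theorem expectedCard_elimStep_le {G : Fin K → Fin K → Bool} (hself : ∀ v, G v v) {α : ℕ}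
    (S : Finset (Fin K)) (hS : ∀ I ⊆ S, (I : Set (Fin K)).Pairwise (G · · = false) → #I ≤ α) :
    expectedCard (elimStep G S) ≤ ENNReal.ofReal (1 - (2 * α : ℝ)⁻¹) * #S := by
  rcases S.eq_empty_or_nonempty with rfl | hne
  · simp [elimStep, expectedCard, PMF.pure_apply]
  rw [expectedCard, elimStep, dif_pos hne, PMF.sum_map_mul, PMF.sum_uniformOfFinset_mul,
    ENNReal.inv_mul_le_iff (by simpa using hne.ne_empty) (ENNReal.natCast_ne_top _)]
  have hbound := sum_card_nonNbhd_le hself S hS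
  calc ∑ u ∈ S, (#{v ∈ S | G u v = false} : ℝ≥0∞)
      = ENNReal.ofReal (∑ u ∈ S, #{v ∈ S | G u v = false} : ℝ) := by
        rw [← Nat.cast_sum, ← Nat.cast_sum, ENNReal.ofReal_natCast]
    _ ≤ ENNReal.ofReal ((1 - (2 * α : ℝ)⁻¹) * #S ^ 2) := ENNReal.ofReal_le_ofReal hbound
    _ = #S * (ENNReal.ofReal (1 - (2 * α : ℝ)⁻¹) * #S) := by
        rw [ENNReal.ofReal_mul' (by positivity), ENNReal.ofReal_pow (by positivity),
          ENNReal.ofReal_natCast]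
        ring

theorem expectedCard_elimProc_le {G : ℕ → Fin K → Fin K → Bool} {q : ℝ≥0∞}
    (hstep : ∀ r S, expectedCard (elimStep (G r) S) ≤ q * #S) (U : Finset (Fin K)) (r : ℕ) :
    expectedCard (elimProc G U r) ≤ q ^ r * #U := by
  induction r with
  | zero => simp [elimProc, expectedCard, PMF.pure_apply]
  | succ r ih =>
    calc expectedCard (elimProc G U (r + 1))
        = ∑ S, elimProc G U r S * expectedCard (elimStep (G (r + 1)) S) :=
          PMF.sum_bind_mul _ _ _
      _ ≤ ∑ S, elimProc G U r S * (q * #S) := by gcongr; exact hstep _ _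
      _ = q * expectedCard (elimProc G U r) := by
          simp only [expectedCard, mul_sum, mul_left_comm]
      _ ≤ q * (q ^ r * #U) := by gcongr
      _ = q ^ (r + 1) * #U := by ring

end Elimination

theorem tsum_le_of_le_min_one_geometric {t : ℕ → ℝ} {q C : ℝ} (ht0 : ∀ r, 0 ≤ t r)
    (ht : ∀ r, t r ≤ min 1 (q ^ r * C)) (hq0 : 0 ≤ q) (hq1 : q < 1) {n : ℕ}
    (hn : q ^ n * C ≤ 1) : ∑' r, t r ≤ n + (1 - q)⁻¹ := by
  have hgeom := summable_geometric_of_lt_one hq0 hq1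
  have ht_sum : Summable t :=
    .of_nonneg_of_le ht0 (fun r => (ht r).trans (min_le_right _ _)) (hgeom.mul_right C)
  rw [← ht_sum.sum_add_tsum_nat_add n, ← tsum_geometric_of_lt_one hq0 hq1]
  refine add_le_add ?_ (((summable_nat_add_iff n).mpr ht_sum).tsum_le_tsum (fun i => ?_) hgeom)
  · calc ∑ r ∈ range n, t r ≤ ∑ _r ∈ range n, (1 : ℝ) :=
          sum_le_sum fun r _ => (ht r).trans (min_le_left _ _)
      _ = n := by simp
  · calc t (i + n) ≤ q ^ (i + n) * C := (ht _).trans (min_le_right _ _)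
      _ = q ^ i * (q ^ n * C) := by ring
      _ ≤ q ^ i := mul_le_of_le_one_right (by positivity) hn

theorem one_sub_inv_pow_mul_le_one {a x : ℝ} (ha : 1 ≤ a) (hx : 0 < x) {n : ℕ}
    (hn : a * Real.log x ≤ n) : (1 - a⁻¹) ^ n * x ≤ 1 := by
  have ha0 : 0 < a := by linarith
  have hlog : Real.log x ≤ n * a⁻¹ := by rwa [← div_eq_mul_inv, le_div_iff₀ ha0, mul_comm]
  calc (1 - a⁻¹) ^ n * x ≤ Real.exp (-a⁻¹) ^ n * x := by
        gcongr
        · linarith [inv_le_one_of_one_le₀ ha]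
        · linarith [Real.add_one_le_exp (-a⁻¹)]
    _ = Real.exp (Real.log x - n * a⁻¹) := by
        rw [Real.exp_sub, Real.exp_log hx, ← Real.exp_nat_mul, mul_neg, Real.exp_neg]
        ring
    _ ≤ 1 := Real.exp_le_one_iff.mpr (by linarith)

theorem stmt6_general (K α : ℕ) (hK : 2 ≤ K)
    (G : ℕ → Fin K → Fin K → Bool)
    (hself : ∀ r v, G r v v = true)
    (hind : ∀ r, IndepNumLE (G r) α)
    (U : Finset (Fin K)) :
    (∑' r : ℕ, ∑ S ∈ Finset.univ.filter (fun S : Finset (Fin K) => S.Nonempty),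
        ((elimProc G U r) S).toReal) ≤ 10 * α * Real.log K := by
  have hα : (1 : ℝ) ≤ α := by exact_mod_cast hind 0 {(⟨0, by omega⟩ : Fin K)} (by simp)
  have hlogK : (1 : ℝ) / 2 ≤ Real.log K := by
    have := Real.log_le_log two_pos (by exact_mod_cast hK : (2 : ℝ) ≤ K)
    linarith [Real.log_two_gt_d9]
  set q : ℝ := 1 - (2 * α : ℝ)⁻¹
  have hq0 : 0 ≤ q := by linarith [inv_le_one_of_one_le₀ (by linarith : (1 : ℝ) ≤ 2 * α)]
  have hq1 : q < 1 := by simp only [q]; linarith [inv_pos.mpr (by linarith : (0 : ℝ) < 2 * α)]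
  have hprocess r : expectedCard (elimProc G U r) ≤ ENNReal.ofReal (q ^ r * K) := by
    refine (expectedCard_elimProc_le
      (fun r S => expectedCard_elimStep_le (hself r) S fun I _ => hind r I) U r).trans ?_
    rw [ENNReal.ofReal_mul (by positivity), ENNReal.ofReal_pow hq0, ENNReal.ofReal_natCast]
    gcongr
    simpa using card_le_univ U
  set n := ⌈2 * α * Real.log K⌉₊
  have hn : (n : ℝ) < 2 * α * Real.log K + 1 := Nat.ceil_lt_add_one (by positivity)
  calc _ ≤ n + (1 - q)⁻¹ := tsum_le_of_le_min_one_geometric (fun r => by positivity)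
          (fun r => sum_nonempty_toReal_le_min (by positivity) (hprocess r)) hq0 hq1
          (one_sub_inv_pow_mul_le_one (by linarith) (by positivity) (Nat.le_ceil _))
    _ = n + 2 * α := by simp [q]
    _ ≤ 10 * α * Real.log K := by nlinarith

/-- If `K ≥ 2` and every feedback graph contains all self-loops and has
independence number at most `α`, then the expected number of steps `τ` until the
uniform-sampling elimination process started from a nonempty `U ⊆ Fin K` empties
satisfies `E[τ] ≤ 10·α·log K`.  Here `E[τ]` is expressed by the exact layer-cake
identity `E[τ] = ∑_{r ≥ 0} P(τ > r) = ∑_{r ≥ 0} P(U_{r+1} ≠ ∅)` (once empty, the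
process stays empty, so `τ > r` iff `U_{r+1} ≠ ∅`). -/
theorem stmt6 (K α : ℕ) (hK : 2 ≤ K)
    (G : ℕ → Fin K → Fin K → Bool)
    (hself : ∀ r v, G r v v = true)
    (hind : ∀ r, IndepNumLE (G r) α)
    (U : Finset (Fin K)) (hU : U.Nonempty) :
    (∑' r : ℕ, ∑ S ∈ Finset.univ.filter (fun S : Finset (Fin K) => S.Nonempty),
        ((elimProc G U r) S).toReal) ≤ 10 * α * Real.log K :=
  stmt6_general K α hK G hself hind U
end
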